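/- arXiv:1502.01399 — 3 statements merged into one kernel-verified Lean document; each statement's English description precedes it below -/
import Mathlib

section
/- (McDiarmid-type coupling) Let k ≥ 3 be an integer and let n be a positive integer. Then for every p ∈ (0,1), the probability that the random directed k-uniform hypergraph D^{(k)}_{n,p} contains a directed loose Hamilton cycle is at least the probability that the random k-uniform hypergraph H^{(k)}_{n,p} contains a loose Hamilton cycle. -/
open MeasureTheory Filter

/-- The Bernoulli measure on `Bool` with success probability `p` (a probability
measure whenever `0 ≤ p ≤ 1`). -/
noncomputable def bern (p : ℝ) : Measure Bool :=
  ENNReal.ofReal p • Measure.dirac true + ENNReal.ofReal (1 - p) • Measure.dirac false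

/-- The ordered `k`-tuples of distinct elements of `Fin n`, i.e. the possible arcs of a
directed `k`-uniform hypergraph on `Fin n`. -/
abbrev InjTup (n k : ℕ) := {f : Fin k → Fin n // Function.Injective f}

/-- The random `k`-uniform hypergraph `H^{(k)}_{n,p}`: each `k`-element subset of
`Fin n` is an edge with probability `p`, independently of all others. -/
noncomputable def hyperMeasure (n k : ℕ) (p : ℝ) :
    Measure ({S : Finset (Fin n) // S.card = k} → Bool) :=
  Measure.pi fun _ => bern p

/-- The random directed `k`-uniform hypergraph `D^{(k)}_{n,p}`: each ordered `k`-tuple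
of distinct elements of `Fin n` is an arc with probability `p`, independently of all
others. -/
noncomputable def dirHyperMeasure (n k : ℕ) (p : ℝ) :
    Measure (InjTup n k → Bool) :=
  Measure.pi fun _ => bern p

/-- A loose Hamilton cycle in a `k`-uniform hypergraph with vertex type `V` and edge
predicate `E`: a cyclic ordering of all vertices together with edges, each consisting of
`k` consecutive vertices, consecutive edges meeting in exactly one vertex and every
vertex covered. -/
def HasLooseHamCycle (k : ℕ) {V : Type*} [Fintype V] [DecidableEq V]
    (E : Finset V → Prop) : Prop :=
  ∃ (m : ℕ) (σ : ZMod (Fintype.card V) ≃ V), 0 < m ∧ Fintype.card V = m * (k - 1) ∧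
    ∀ i : Fin m,
      Function.Injective (fun t : Fin k => σ (((i : ℕ) * (k - 1) + (t : ℕ) : ℕ))) ∧
      E (Finset.image (fun t : Fin k => σ (((i : ℕ) * (k - 1) + (t : ℕ) : ℕ))) Finset.univ)

/-- A directed loose Hamilton cycle in a directed `k`-uniform hypergraph with vertex
type `V` and arc predicate `A`: a cyclic ordering of all vertices together with arcs,
each arc being a block of `k` consecutive vertices taken in the order of the cyclic
ordering, such that consecutive arcs meet in exactly one vertex, the last vertex of each
arc is the first vertex of the next one, and every vertex is covered. -/
def HasDirLooseHamCycle (k : ℕ) {V : Type*} [Fintype V]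
    (A : (Fin k → V) → Prop) : Prop :=
  ∃ (m : ℕ) (σ : ZMod (Fintype.card V) ≃ V), 0 < m ∧ Fintype.card V = m * (k - 1) ∧
    ∀ i : Fin m,
      Function.Injective (fun t : Fin k => σ (((i : ℕ) * (k - 1) + (t : ℕ) : ℕ))) ∧
      A (fun t : Fin k => σ (((i : ℕ) * (k - 1) + (t : ℕ) : ℕ)))

/-!
McDiarmid's coupling. Both events have the shape `∃ c, ∀ j, x j ∈ A c j`: `c` runs over the
loose Hamilton cycles of the complete `k`-graph, `j` over the `k`-sets `S`, and on the directed
side the coordinate `S` is the block of all arcs with vertex set `S`. Replacing one coordinate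
at a time (Fubini), the probability of such an event can only grow if, for each coordinate `j`
and each family `T` of cycles, `⋃ c ∈ T, A c j` is no more likely than `⋃ c ∈ T, B c j`. For a
`k`-set `S` both sides are certain if some `c ∈ T` avoids `S`. Otherwise the undirected side
has probability at most `p`, while each `c ∈ T` uses `S` as exactly one of its edges (for
`k ≥ 3` distinct edges of a loose cycle are distinct sets) and so asks for one arc of `S` only,
an event of probability `p`.
-/

theorem Measure.pi_setOf_exists_forall_eq_prod {N : ℕ} {Z : Fin (N + 1) → Type*}
    [∀ i, MeasurableSpace (Z i)] (κ : ∀ i, Measure (Z i)) [∀ i, SigmaFinite (κ i)] {C : Type*}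
    (D : C → ∀ i, Set (Z i)) :
    Measure.pi κ {z | ∃ c, ∀ i, z i ∈ D c i} =
      (κ 0).prod (Measure.pi fun j => κ (Fin.succAbove 0 j))
        {z | ∃ c, (∀ j, z.2 j ∈ D c (Fin.succAbove 0 j)) ∧ z.1 ∈ D c 0} := by
  rw [← (measurePreserving_piFinSuccAbove κ 0).symm.measure_preimage_equiv]
  congr 1
  ext ⟨a, zs⟩
  simp only [Set.mem_preimage, Set.mem_ofPred_eq, Fin.forall_iff_succAbove 0,
    show (MeasurableEquiv.piFinSuccAbove Z 0).symm (a, zs) = Fin.insertNth 0 a zs from rfl,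
    Fin.insertNth_apply_same, Fin.insertNth_apply_succAbove, and_comm]

theorem Measure.pi_fin_setOf_exists_forall_le {N : ℕ} {X Y : Fin N → Type*}
    [∀ i, MeasurableSpace (X i)] [∀ i, MeasurableSpace (Y i)]
    [∀ i, Countable (X i)] [∀ i, Countable (Y i)]
    [∀ i, MeasurableSingletonClass (X i)] [∀ i, MeasurableSingletonClass (Y i)]
    (μ : ∀ i, Measure (X i)) (ν : ∀ i, Measure (Y i))
    [∀ i, SigmaFinite (μ i)] [∀ i, SigmaFinite (ν i)]
    {C : Type*} (A : C → ∀ i, Set (X i)) (B : C → ∀ i, Set (Y i))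
    (h : ∀ i (T : Set C), μ i {x | ∃ c ∈ T, x ∈ A c i} ≤ ν i {y | ∃ c ∈ T, y ∈ B c i}) :
    Measure.pi μ {x | ∃ c, ∀ i, x i ∈ A c i} ≤ Measure.pi ν {y | ∃ c, ∀ i, y i ∈ B c i} := by
  induction N generalizing C with
  | zero => rcases isEmpty_or_nonempty C with hC | hC <;> simp
  | succ N ih =>
    set ρX := Measure.pi fun j => μ (Fin.succAbove 0 j)
    set ρY := Measure.pi fun j => ν (Fin.succAbove 0 j)
    set U := {z : Y 0 × ∀ j, X (Fin.succAbove 0 j) |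
      ∃ c, (∀ j, z.2 j ∈ A c (Fin.succAbove 0 j)) ∧ z.1 ∈ B c 0}
    calc Measure.pi μ {x | ∃ c, ∀ i, x i ∈ A c i}
        = ∫⁻ xs, μ 0 {x | ∃ c ∈ {c | ∀ j, xs j ∈ A c (Fin.succAbove 0 j)}, x ∈ A c 0} ∂ρX := by
          rw [Measure.pi_setOf_exists_forall_eq_prod, Measure.prod_apply_symm .of_discrete]
          rfl
      _ ≤ ∫⁻ xs, ν 0 {y | ∃ c ∈ {c | ∀ j, xs j ∈ A c (Fin.succAbove 0 j)}, y ∈ B c 0} ∂ρX :=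
          lintegral_mono fun xs => h 0 _
      _ = (ν 0).prod ρX U := (Measure.prod_apply_symm (s := U) .of_discrete).symm
      -- Fubini the other way round: once `y` is fixed, only the cycles with `y ∈ B c 0` remain
      _ = ∫⁻ y, ρX {xs | ∃ c : {c // y ∈ B c 0}, ∀ j, xs j ∈ A c (Fin.succAbove 0 j)} ∂ν 0 := by
          rw [Measure.prod_apply .of_discrete]
          simp only [U, Set.preimage_ofPred_eq, Subtype.exists, exists_prop, and_comm]
      _ ≤ ∫⁻ y, ρY {ys | ∃ c : {c // y ∈ B c 0}, ∀ j, ys j ∈ B c (Fin.succAbove 0 j)} ∂ν 0 := by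
          refine lintegral_mono fun y => ih _ _
            (fun (c : {c // y ∈ B c 0}) j => A c (Fin.succAbove 0 j))
            (fun (c : {c // y ∈ B c 0}) j => B c (Fin.succAbove 0 j)) fun j T => ?_
          simpa only [Set.mem_image, Subtype.exists, exists_and_right, exists_eq_right] using
            h (Fin.succAbove 0 j) (Subtype.val '' T)
      _ = Measure.pi ν {y | ∃ c, ∀ i, y i ∈ B c i} := by
          rw [Measure.pi_setOf_exists_forall_eq_prod, Measure.prod_apply .of_discrete]
          simp only [Set.preimage_ofPred_eq, Subtype.exists, exists_prop, and_comm]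
          rfl

theorem Measure.pi_setOf_exists_forall_congr_left {ι ι' : Type*} [Fintype ι] [Fintype ι']
    (e : ι' ≃ ι) {Z : ι → Type*} [∀ i, MeasurableSpace (Z i)] (κ : ∀ i, Measure (Z i))
    [∀ i, SigmaFinite (κ i)] {C : Type*} (D : C → ∀ i, Set (Z i)) :
    Measure.pi κ {z | ∃ c, ∀ i, z i ∈ D c i} =
      Measure.pi (fun j => κ (e j)) {z | ∃ c, ∀ j, z j ∈ D c (e j)} := by
  rw [← (measurePreserving_piCongrLeft κ e).measure_preimage_equiv]
  congr 1
  ext z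
  simp only [Set.mem_preimage, Set.mem_ofPred_eq, MeasurableEquiv.coe_piCongrLeft,
    ← e.forall_congr_right, Equiv.piCongrLeft_apply_apply]

theorem Measure.pi_setOf_exists_forall_le {ι : Type*} [Fintype ι] {X Y : ι → Type*}
    [∀ i, MeasurableSpace (X i)] [∀ i, MeasurableSpace (Y i)]
    [∀ i, Countable (X i)] [∀ i, Countable (Y i)]
    [∀ i, MeasurableSingletonClass (X i)] [∀ i, MeasurableSingletonClass (Y i)]
    (μ : ∀ i, Measure (X i)) (ν : ∀ i, Measure (Y i))
    [∀ i, SigmaFinite (μ i)] [∀ i, SigmaFinite (ν i)]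
    {C : Type*} (A : C → ∀ i, Set (X i)) (B : C → ∀ i, Set (Y i))
    (h : ∀ i (T : Set C), μ i {x | ∃ c ∈ T, x ∈ A c i} ≤ ν i {y | ∃ c ∈ T, y ∈ B c i}) :
    Measure.pi μ {x | ∃ c, ∀ i, x i ∈ A c i} ≤ Measure.pi ν {y | ∃ c, ∀ i, y i ∈ B c i} := by
  let e := (Fintype.equivFin ι).symm
  rw [Measure.pi_setOf_exists_forall_congr_left e, Measure.pi_setOf_exists_forall_congr_left e]
  exact Measure.pi_fin_setOf_exists_forall_le _ _ _ _ fun j => h (e j)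

theorem isProbabilityMeasure_bern {p : ℝ} (hp0 : 0 ≤ p) (hp1 : p ≤ 1) :
    IsProbabilityMeasure (bern p) :=
  ⟨by simp [bern, ← ENNReal.ofReal_add hp0 (sub_nonneg.2 hp1)]⟩

def MeasurableEquiv.piFiberCurry {α β : Type*} [DecidableEq β] (g : α → β) (X : Type*)
    [MeasurableSpace X] : (α → X) ≃ᵐ ∀ b, {a // g a = b} → X :=
  (MeasurableEquiv.piCongrLeft (fun _ => X) (Equiv.sigmaFiberEquiv g)).symm.trans
    (MeasurableEquiv.piCurry fun b (_ : {a // g a = b}) => X)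

theorem MeasurableEquiv.piFiberCurry_apply {α β : Type*} [DecidableEq β] (g : α → β)
    (X : Type*) [MeasurableSpace X] (x : α → X) (b : β) (a : {a // g a = b}) :
    piFiberCurry g X x b a = x a :=
  rfl

theorem measurePreserving_piFiberCurry {α β : Type*} [Fintype α] [Fintype β] [DecidableEq β]
    (g : α → β) {X : Type*} [MeasurableSpace X] (μ : Measure X) [IsProbabilityMeasure μ] :
    MeasurePreserving (MeasurableEquiv.piFiberCurry g X)
      (Measure.pi fun _ : α => μ) (Measure.pi fun b => Measure.pi fun _ : {a // g a = b} => μ) := by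
  refine (measurePreserving_piCongrLeft (fun _ => μ) _).symm.trans ⟨by fun_prop, ?_⟩
  simp only [← Measure.infinitePi_eq_pi]
  exact Measure.infinitePi_map_piCurry fun _ _ => μ

theorem ZMod.eq_of_image_add_eq {ν k : ℕ} (hk : 0 < k) (hkν : k < ν) {a b : ZMod ν}
    (h : Finset.univ.image (fun t : Fin k => a + (t : ℕ)) =
      Finset.univ.image (fun t : Fin k => b + (t : ℕ))) : a = b := by
  have mem_iff {c x : ZMod ν} : x ∈ Finset.univ.image (fun t : Fin k => c + (t : ℕ)) ↔
      ∃ t < k, c + (t : ℕ) = x := by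
    simp only [Finset.mem_image, Finset.mem_univ, true_and]
    exact ⟨fun ⟨t, ht⟩ => ⟨t, t.2, ht⟩, fun ⟨t, ht, hx⟩ => ⟨⟨t, ht⟩, hx⟩⟩
  -- `a - 1 = a + s` would force `ν ∣ s + 1 ≤ k`
  have pred_not_mem : a - 1 ∉ Finset.univ.image (fun t : Fin k => a + (t : ℕ)) := by
    rw [mem_iff]
    rintro ⟨s, hs, hsa⟩
    have hs1 : ((s + 1 : ℕ) : ZMod ν) = 0 := by
      push_cast
      linear_combination hsa
    have := Nat.le_of_dvd s.succ_pos ((ZMod.natCast_eq_zero_iff _ _).mp hs1)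
    omega
  have ha : a ∈ Finset.univ.image (fun t : Fin k => b + (t : ℕ)) :=
    h ▸ mem_iff.mpr ⟨0, hk, by simp⟩
  obtain ⟨t, ht, hta⟩ := mem_iff.mp ha
  rcases Nat.eq_zero_or_pos t with rfl | ht0
  · simpa using hta.symm
  · refine absurd ?_ pred_not_mem
    rw [h, mem_iff]
    refine ⟨t - 1, by omega, ?_⟩
    rw [← hta, Nat.cast_sub ht0]
    ring

section LooseHamCycle

variable {V : Type*} [Fintype V] {k : ℕ}

structure LooseHamCycle (V : Type*) [Fintype V] (k : ℕ) where
  m : ℕ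
  σ : ZMod (Fintype.card V) ≃ V
  m_pos : 0 < m
  card_eq : Fintype.card V = m * (k - 1)
  injective_block : ∀ i : Fin m,
    Function.Injective (fun t : Fin k => σ (((i : ℕ) * (k - 1) + (t : ℕ) : ℕ)))

def LooseHamCycle.arc (c : LooseHamCycle V k) (i : Fin c.m) :
    {f : Fin k → V // Function.Injective f} :=
  ⟨fun t => c.σ (((i : ℕ) * (k - 1) + (t : ℕ) : ℕ)), c.injective_block i⟩

theorem hasDirLooseHamCycle_iff (A : (Fin k → V) → Prop) :
    HasDirLooseHamCycle k A ↔ ∃ c : LooseHamCycle V k, ∀ i, A (c.arc i).1 :=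
  ⟨fun ⟨m, σ, hm, hcard, h⟩ => ⟨⟨m, σ, hm, hcard, fun i => (h i).1⟩, fun i => (h i).2⟩,
    fun ⟨c, hc⟩ => ⟨c.m, c.σ, c.m_pos, c.card_eq, fun i => ⟨c.injective_block i, hc i⟩⟩⟩

variable [DecidableEq V]

def injTupleImage (f : {f : Fin k → V // Function.Injective f}) : {S : Finset V // S.card = k} :=
  ⟨Finset.univ.image f.1, by
    rw [Finset.card_image_of_injective _ f.2, Finset.card_univ, Fintype.card_fin]⟩

namespace LooseHamCycle

def edge (c : LooseHamCycle V k) (i : Fin c.m) : {S : Finset V // S.card = k} :=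
  injTupleImage (c.arc i)

theorem edge_injective (hk : 3 ≤ k) (c : LooseHamCycle V k) : Function.Injective c.edge := by
  intro i i' h
  rcases Nat.lt_or_ge c.m 2 with hm | hm
  · exact Fin.ext (by omega)
  have hcard := c.card_eq
  have hkν : k < Fintype.card V := by
    have := Nat.mul_le_mul_right (k - 1) hm
    omega
  have image_arc (j : Fin c.m) : Finset.univ.image (c.arc j).1 = (Finset.univ.image fun t : Fin k =>
      (((j : ℕ) * (k - 1) : ℕ) : ZMod (Fintype.card V)) + (t : ℕ)).image c.σ := by
    rw [Finset.image_image]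
    congr 1
    ext t
    simp [arc]
  have hstart := ZMod.eq_of_image_add_eq (by omega) hkν <| Finset.image_injective c.σ.injective <|
    (image_arc i).symm.trans ((congrArg Subtype.val h).trans (image_arc i'))
  have hlt (j : Fin c.m) : (j : ℕ) * (k - 1) < Fintype.card V := by
    rw [hcard]
    exact Nat.mul_lt_mul_of_pos_right j.2 (by omega)
  rw [ZMod.natCast_eq_natCast_iff', Nat.mod_eq_of_lt (hlt i), Nat.mod_eq_of_lt (hlt i')] at hstart
  exact Fin.ext (Nat.eq_of_mul_eq_mul_right (by omega) hstart)

def edgeCompat (c : LooseHamCycle V k) (S : {S : Finset V // S.card = k}) : Set Bool :=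
  {b | S ∈ Set.range c.edge → b = true}

def arcsCompat (c : LooseHamCycle V k) (S : {S : Finset V // S.card = k}) :
    Set ({f : {f : Fin k → V // Function.Injective f} // injTupleImage f = S} → Bool) :=
  {g | ∀ i (h : c.edge i = S), g ⟨c.arc i, h⟩ = true}

theorem bern_edgeCompat_le_pi_arcsCompat (hk : 3 ≤ k) {p : ℝ} (hp0 : 0 ≤ p) (hp1 : p ≤ 1)
    (S : {S : Finset V // S.card = k}) (T : Set (LooseHamCycle V k)) :
    bern p {b | ∃ c ∈ T, b ∈ c.edgeCompat S} ≤
      Measure.pi (fun _ => bern p) {g | ∃ c ∈ T, g ∈ c.arcsCompat S} := by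
  have := isProbabilityMeasure_bern hp0 hp1
  by_cases hfree : ∃ c ∈ T, S ∉ Set.range c.edge
  · obtain ⟨c, hc, hS⟩ := hfree
    have huniv : {g | ∃ c ∈ T, g ∈ c.arcsCompat S} = Set.univ :=
      Set.eq_univ_of_forall fun g => ⟨c, hc, fun i hi => absurd ⟨i, hi⟩ hS⟩
    rw [huniv, measure_univ]
    exact prob_le_one
  push Not at hfree
  rcases T.eq_empty_or_nonempty with rfl | ⟨c, hc⟩
  · simp
  obtain ⟨i, hi⟩ := hfree c hc
  calc bern p {b | ∃ c ∈ T, b ∈ c.edgeCompat S}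
      ≤ bern p {true} := by
        refine measure_mono ?_
        rintro b ⟨c', hc', hb⟩
        exact hb (hfree c' hc')
    _ = Measure.pi (fun _ : {f // injTupleImage f = S} => bern p)
          (Function.eval ⟨c.arc i, hi⟩ ⁻¹' {true}) :=
      ((measurePreserving_eval (fun _ => bern p) _).measure_preimage
        MeasurableSet.of_discrete.nullMeasurableSet).symm
    _ ≤ Measure.pi (fun _ => bern p) {g | ∃ c ∈ T, g ∈ c.arcsCompat S} := by
      refine measure_mono fun g hg => ⟨c, hc, fun i' hi' => ?_⟩
      obtain rfl := c.edge_injective hk (hi'.trans hi.symm)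
      exact hg

end LooseHamCycle

theorem hasLooseHamCycle_iff (E : Finset V → Prop) :
    HasLooseHamCycle k E ↔ ∃ c : LooseHamCycle V k, ∀ i, E (c.edge i).1 :=
  ⟨fun ⟨m, σ, hm, hcard, h⟩ => ⟨⟨m, σ, hm, hcard, fun i => (h i).1⟩, fun i => (h i).2⟩,
    fun ⟨c, hc⟩ => ⟨c.m, c.σ, c.m_pos, c.card_eq, fun i => ⟨c.injective_block i, hc i⟩⟩⟩

theorem setOf_hasLooseHamCycle_eq :
    {ω : {S : Finset V // S.card = k} → Bool |
      HasLooseHamCycle k fun S : Finset V => ∃ h : S.card = k, ω ⟨S, h⟩ = true} =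
      {ω | ∃ c : LooseHamCycle V k, ∀ S, ω S ∈ c.edgeCompat S} := by
  ext ω
  simp only [Set.mem_ofPred_eq, hasLooseHamCycle_iff]
  refine exists_congr fun c => ⟨fun h S ⟨i, hi⟩ => ?_, fun h i => ⟨(c.edge i).2, h _ ⟨i, rfl⟩⟩⟩
  subst hi
  exact (h i).2

theorem setOf_hasDirLooseHamCycle_eq :
    {ω : {f : Fin k → V // Function.Injective f} → Bool | HasDirLooseHamCycle k fun f =>
      ∃ h : Function.Injective f, ω ⟨f, h⟩ = true} =
      MeasurableEquiv.piFiberCurry injTupleImage Bool ⁻¹'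
        {y | ∃ c : LooseHamCycle V k, ∀ S, y S ∈ c.arcsCompat S} := by
  ext ω
  simp only [Set.mem_ofPred_eq, Set.mem_preimage, hasDirLooseHamCycle_iff,
    LooseHamCycle.arcsCompat, MeasurableEquiv.piFiberCurry_apply]
  exact exists_congr fun c => ⟨fun h S i _ => (h i).2, fun h i => ⟨(c.arc i).2, h _ i rfl⟩⟩

end LooseHamCycle

theorem statement7_general (k n : ℕ) (hk : 3 ≤ k) (p : ℝ)
    (hp : p ∈ Set.Ioo (0 : ℝ) 1) :
    hyperMeasure n k p
        {ω | HasLooseHamCycle k fun S : Finset (Fin n) => ∃ h : S.card = k, ω ⟨S, h⟩ = true} ≤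
      dirHyperMeasure n k p
        {ω | HasDirLooseHamCycle k fun f : Fin k → Fin n =>
          ∃ h : Function.Injective f, ω ⟨f, h⟩ = true} := by
  have := isProbabilityMeasure_bern hp.1.le hp.2.le
  rw [hyperMeasure, dirHyperMeasure, setOf_hasLooseHamCycle_eq, setOf_hasDirLooseHamCycle_eq,
    (measurePreserving_piFiberCurry injTupleImage (bern p)).measure_preimage_equiv]
  exact Measure.pi_setOf_exists_forall_le _ _ _ _ fun S T =>
    LooseHamCycle.bern_edgeCompat_le_pi_arcsCompat hk hp.1.le hp.2.le S T

/-- (McDiarmid-type coupling)  Let `k ≥ 3` and `n ≥ 1`.  For every `p ∈ (0,1)`, the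
probability that `D^{(k)}_{n,p}` contains a directed loose Hamilton cycle is at least
the probability that `H^{(k)}_{n,p}` contains a loose Hamilton cycle. -/
theorem statement7 (k n : ℕ) (hk : 3 ≤ k) (hn : 0 < n) (p : ℝ)
    (hp : p ∈ Set.Ioo (0 : ℝ) 1) :
    hyperMeasure n k p
        {ω | HasLooseHamCycle k fun S : Finset (Fin n) => ∃ h : S.card = k, ω ⟨S, h⟩ = true} ≤
      dirHyperMeasure n k p
        {ω | HasDirLooseHamCycle k fun f : Fin k → Fin n =>
          ∃ h : Function.Injective f, ω ⟨f, h⟩ = true} :=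
  statement7_general k n hk p hp
end

section
/- Let k ≥ 3, let e* = {x_1,…,x_k} be a k-element subset of [n] with a fixed ordering (x_1,…,x_k), and let H be a k-uniform directed hypergraph on [n] containing the set e* as an edge (in the sense that some hypergraph H_0 on [n] contains e*). Let V* = ([n] \ {x_1,…,x_k}) ∪ {e*}, and let D be the directed k-uniform hypergraph on V* whose arcs are those arcs e of H satisfying one of: e ∩ e* = ∅; e ∩ e* = {x_1} and x_1 is not the first vertex of e (with x_1 replaced by the vertex e* in the arc); or e ∩ e* = {x_k} and x_k is the first vertex of e (with x_k replaced by the vertex e*). If D contains a directed loose Hamilton cycle in which the vertex e* occurs as a starting or ending vertex of the arcs containing it, then the undirected hypergraph on [n] consisting of the edge e* together with the underlying unordered edges of H contains a loose Hamilton cycle. -/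
/-!
Rotate the directed Hamilton cycle of `D` so that the contracted vertex `e*` sits at position
`0`, hence also at the closing position `N`. Expanding the initial `e*` into the block
`x₀, …, x_{k-1}` and the final `e*` into `x₀` gives a cyclic ordering of `[n]` with one edge
more: the new first edge is `e*`, the arc of `D` leaving `e*` is an arc of `H` starting at
`x_{k-1}`, the arc entering `e*` is an arc of `H` ending at `x₀`, and all other arcs of `D`
avoid `e*`.
-/

open Set Function

lemma mul_add_le_mul_of_lt {i m c t : ℕ} (hi : i < m) (ht : t ≤ c) : i * c + t ≤ m * c := by
  nlinarith

lemma exists_rotated_walk {V : Type*} {N m k : ℕ} (σ : ZMod N ≃ V) (hN : N = m * (k - 1))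
    {P : (Fin k → V) → Prop}
    (hP : ∀ i : Fin m, P (fun t : Fin k => σ ((i * (k - 1) + t : ℕ))))
    (c : ℕ) :
    ∃ w : ℕ → V, w 0 = σ ((c * (k - 1) : ℕ)) ∧ w N = w 0 ∧ InjOn w (Iio N) ∧
      ∀ i < m, P (fun t : Fin k => w (i * (k - 1) + t)) := by
  refine ⟨fun j => σ ((j + c * (k - 1) : ℕ)), by simp, by simp, ?_, fun i hi => ?_⟩
  · intro a ha b hb hab
    rw [σ.apply_eq_iff_eq, ZMod.natCast_eq_natCast_iff] at hab
    exact (Nat.ModEq.add_right_cancel' _ hab).eq_of_lt_of_lt ha hb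
  · convert hP ⟨(i + c) % m, Nat.mod_lt _ (by omega)⟩ using 3 with t
    rw [ZMod.natCast_eq_natCast_iff]
    have h : (i + c) % m * (k - 1) ≡ (i + c) * (k - 1) [MOD N] :=
      hN ▸ (Nat.mod_modEq _ _).mul_right' _
    convert (h.add_right t).symm using 1
    ring

lemma hasLooseHamCycle_of_walk {k m N : ℕ} {V : Type*} [Fintype V] [DecidableEq V]
    {E : Finset V → Prop} (w : ℕ → V) (hcard : Fintype.card V = N) (hk : 0 < k)
    (hN : N = m * (k - 1)) (hkN : k ≤ N) (hinj : InjOn w (Iio N)) (hclosed : w N = w 0)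
    (hE : ∀ i < m, E (Finset.image (fun t : Fin k => w (i * (k - 1) + t)) Finset.univ)) :
    HasLooseHamCycle k E := by
  subst hcard
  have hpos : 0 < Fintype.card V := by omega
  have : NeZero (Fintype.card V) := ⟨hpos.ne'⟩
  have hσinj : Injective fun z : ZMod (Fintype.card V) => w z.val := fun a b hab =>
    ZMod.val_injective _ (hinj (ZMod.val_lt a) (ZMod.val_lt b) hab)
  let σ := Equiv.ofBijective _ ((Fintype.bijective_iff_injective_and_card _).2
    ⟨hσinj, ZMod.card _⟩)
  have hσ : ∀ j ≤ Fintype.card V, σ j = w j := by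
    intro j hj
    show w (j : ZMod (Fintype.card V)).val = w j
    rcases hj.lt_or_eq with hj | rfl
    · rw [ZMod.val_natCast_of_lt hj]
    · rw [ZMod.natCast_self, ZMod.val_zero, hclosed]
  refine ⟨m, σ, Nat.pos_of_mul_pos_right (hN ▸ hpos), hN,
    fun i => ⟨fun t t' htt => ?_, ?_⟩⟩
  · rw [σ.apply_eq_iff_eq, Nat.cast_add, Nat.cast_add, add_right_inj,
      ZMod.natCast_eq_natCast_iff] at htt
    exact Fin.ext (htt.eq_of_lt_of_lt (by omega) (by omega))
  · convert hE i i.isLt using 3 with t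
    exact hσ _ (hN ▸ mul_add_le_mul_of_lt i.isLt (by omega))

section expandWalk

variable {α : Type*} [DecidableEq α] {k : ℕ}

/-- Position `j` reads `w (j - (k - 1))`: by truncated subtraction all of `0, …, k - 1` read
`w 0`, and an occurrence of `none` (the contracted vertex) there is expanded to `x j`; any later
`none` closes the cycle with `a`. -/
def expandWalk (x : Fin k → α) (a : α)
    (w : ℕ → Option {v : α // v ∉ Finset.image x Finset.univ}) (j : ℕ) : α :=
  (w (j - (k - 1))).elim (if h : j < k then x ⟨j, h⟩ else a) Subtype.val

variable (x : Fin k → α) (a : α)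
  (w : ℕ → Option {v : α // v ∉ Finset.image x Finset.univ})

lemma expandWalk_of_lt (hw0 : w 0 = none) {j : ℕ} (hj : j < k) :
    expandWalk x a w j = x ⟨j, hj⟩ := by
  simp [expandWalk, Nat.sub_eq_zero_of_le (Nat.le_sub_one_of_lt hj), hw0, hj]

lemma expandWalk_add_of_some {q : ℕ} {v} (h : w q = some v) :
    expandWalk x a w (q + (k - 1)) = v := by
  simp [expandWalk, h]

lemma expandWalk_add_of_none {q : ℕ} (h : w q = none) (hq : q ≠ 0) :
    expandWalk x a w (q + (k - 1)) = a := by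
  simp only [expandWalk, Nat.add_sub_cancel, h, Option.elim_none]
  rw [dif_neg (by omega)]

variable {x w}

lemma exists_expandWalk_eq_some (hw0 : w 0 = none) {N : ℕ} (hinj : InjOn w (Iio N)) {j : ℕ}
    (hkj : k - 1 < j) (hjN : j < N + (k - 1)) :
    ∃ v, w (j - (k - 1)) = some v ∧ expandWalk x a w j = v := by
  obtain ⟨q, rfl⟩ : ∃ q, j = q + (k - 1) := ⟨j - (k - 1), by omega⟩
  rw [Nat.add_sub_cancel]
  cases hq : w q with
  | none =>
    have := hinj (mem_Iio.2 (by omega)) (mem_Iio.2 (by omega)) (hq.trans hw0.symm)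
    omega
  | some v => exact ⟨v, rfl, expandWalk_add_of_some x a w hq⟩

lemma expandWalk_injOn (hk : 0 < k) (hx : Injective x) (hw0 : w 0 = none) {N : ℕ}
    (hinj : InjOn w (Iio N)) :
    InjOn (expandWalk x a w) (Iio (N + (k - 1))) := by
  intro j hj j' hj' h
  rw [mem_Iio] at hj hj'
  have hmem : ∀ v : {v // v ∉ Finset.image x Finset.univ}, ∀ (t : Fin k), x t ≠ v :=
    fun v t ht => v.2 (ht ▸ Finset.mem_image_of_mem x (Finset.mem_univ t))
  rcases lt_or_ge j k with hjk | hjk <;> rcases lt_or_ge j' k with hjk' | hjk'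
  · rw [expandWalk_of_lt x a w hw0 hjk, expandWalk_of_lt x a w hw0 hjk'] at h
    exact Fin.mk.inj (hx h)
  · obtain ⟨v', -, hv'⟩ := exists_expandWalk_eq_some a hw0 hinj (by omega) hj'
    rw [expandWalk_of_lt x a w hw0 hjk, hv'] at h
    exact absurd h (hmem _ _)
  · obtain ⟨v, -, hv⟩ := exists_expandWalk_eq_some a hw0 hinj (by omega) hj
    rw [expandWalk_of_lt x a w hw0 hjk', hv] at h
    exact absurd h.symm (hmem _ _)
  · obtain ⟨v, hwv, hv⟩ := exists_expandWalk_eq_some a hw0 hinj (by omega) hj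
    obtain ⟨v', hwv', hv'⟩ := exists_expandWalk_eq_some a hw0 hinj (by omega) hj'
    rw [hv, hv', ← Subtype.ext_iff] at h
    have := hinj (mem_Iio.2 (by omega)) (mem_Iio.2 (by omega)) (hwv.trans (h ▸ hwv'.symm))
    omega

lemma expandWalk_arc (hk : 0 < k) (hw0 : w 0 = none) {N : ℕ} (hinj : InjOn w (Iio N))
    {i : ℕ} (hi : i * (k - 1) < N) {f : Fin k → α}
    (hf : (∀ t : Fin k, ∃ h : f t ∉ Finset.image x Finset.univ,
          w (i * (k - 1) + t) = some ⟨f t, h⟩) ∨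
        (∃ t0 : Fin k, t0 ≠ ⟨0, hk⟩ ∧ f t0 = x ⟨0, hk⟩ ∧
          w (i * (k - 1) + t0) = none ∧
          ∀ t : Fin k, t ≠ t0 → ∃ h : f t ∉ Finset.image x Finset.univ,
            w (i * (k - 1) + t) = some ⟨f t, h⟩) ∨
        (f ⟨0, hk⟩ = x ⟨k - 1, by omega⟩ ∧ w (i * (k - 1)) = none ∧
          ∀ t : Fin k, t ≠ ⟨0, hk⟩ → ∃ h : f t ∉ Finset.image x Finset.univ,
            w (i * (k - 1) + t) = some ⟨f t, h⟩)) :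
    (fun t : Fin k => expandWalk x (x ⟨0, hk⟩) w ((i + 1) * (k - 1) + t)) = f := by
  have hshift : ∀ t : ℕ, (i + 1) * (k - 1) + t = i * (k - 1) + t + (k - 1) := fun t => by ring
  have of_rest : ∀ t0 : Fin k,
      expandWalk x (x ⟨0, hk⟩) w (i * (k - 1) + t0 + (k - 1)) = f t0 →
      (∀ t : Fin k, t ≠ t0 → ∃ h : f t ∉ Finset.image x Finset.univ,
        w (i * (k - 1) + t) = some ⟨f t, h⟩) →
      (fun t : Fin k => expandWalk x (x ⟨0, hk⟩) w ((i + 1) * (k - 1) + t)) = f := by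
    intro t0 h0 hrest
    funext t
    rw [hshift]
    by_cases ht : t = t0
    · exact ht ▸ h0
    · obtain ⟨_, hwt⟩ := hrest t ht
      exact expandWalk_add_of_some x _ w hwt
  rcases hf with hall | ⟨t0, ht0, hft0, hwt0, hrest⟩ | ⟨hf0, hwi, hrest⟩
  · refine of_rest ⟨0, hk⟩ ?_ (fun t _ => hall t)
    obtain ⟨_, hwt⟩ := hall ⟨0, hk⟩
    exact expandWalk_add_of_some x _ w hwt
  · have ht0pos : i * (k - 1) + t0 ≠ 0 := fun h => ht0 (Fin.ext (show (t0 : ℕ) = 0 by omega))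
    refine of_rest t0 ?_ hrest
    rw [expandWalk_add_of_none x _ w hwt0 ht0pos, hft0]
  · -- before position `N`, the contracted vertex occurs in `w` only at `0`
    have hi0 : i * (k - 1) = 0 := hinj hi (mem_Iio.2 (by omega)) (hwi.trans hw0.symm)
    refine of_rest ⟨0, hk⟩ ?_ hrest
    simp only [hi0, zero_add]
    rw [expandWalk_of_lt x _ w hw0 (by omega), hf0]

end expandWalk

lemma card_option_compl_image_add {α : Type*} [Fintype α] [DecidableEq α] {k : ℕ}
    {x : Fin k → α} (hx : Injective x) :
    Fintype.card (Option {v // v ∉ Finset.image x Finset.univ}) + k = Fintype.card α + 1 := by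
  have hk := Fintype.card_le_of_injective x hx
  simp only [Fintype.card_option, Fintype.card_subtype_compl, Fintype.card_coe,
    Finset.card_image_of_injective _ hx, Finset.card_univ, Fintype.card_fin] at hk ⊢
  omega

/-- Let `k ≥ 3`, let `e* = {x 0, …, x (k-1)}` be a `k`-element subset of `Fin n` with a
fixed ordering `x`, and let `A` be the arc predicate of a directed `k`-uniform
hypergraph `H` on `Fin n`.  Let `V* = (Fin n \ e*) ∪ {e*}` (modelled as
`Option {v // v ∉ e*}`, where `none` is the new vertex `e*`), and let `D` (with arc
predicate `DA`) be the directed `k`-uniform hypergraph on `V*` whose arcs are those arcs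
`f` of `H` such that either `f` avoids `e*`, or `f` meets `e*` exactly in `x 0` with
`x 0` not the first vertex of `f` (with `x 0` replaced by the new vertex `e*`), or `f`
meets `e*` exactly in `x (k-1)` with `x (k-1)` the first vertex of `f` (with `x (k-1)`
replaced by `e*`).  If `D` contains a directed loose Hamilton cycle in which the vertex
`e*` occurs as a starting or ending vertex of the arcs containing it, then the
undirected hypergraph on `Fin n` whose edges are `e*` together with the underlying
unordered edges of `H` contains a loose Hamilton cycle. -/
theorem statement12 (n k : ℕ) (hk : 3 ≤ k) (x : Fin k → Fin n)
    (hx : Function.Injective x) (A : (Fin k → Fin n) → Prop)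
    (DA : (Fin k → Option {v : Fin n // v ∉ Finset.image x Finset.univ}) → Prop)
    (hDA : ∀ g, DA g ↔ ∃ f : Fin k → Fin n, A f ∧
      ((∀ t : Fin k, ∃ h : f t ∉ Finset.image x Finset.univ, g t = some ⟨f t, h⟩) ∨
       (∃ t0 : Fin k, t0 ≠ ⟨0, by omega⟩ ∧ f t0 = x ⟨0, by omega⟩ ∧ g t0 = none ∧
          ∀ t : Fin k, t ≠ t0 →
            ∃ h : f t ∉ Finset.image x Finset.univ, g t = some ⟨f t, h⟩) ∨
       (f ⟨0, by omega⟩ = x ⟨k - 1, by omega⟩ ∧ g ⟨0, by omega⟩ = none ∧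
          ∀ t : Fin k, t ≠ ⟨0, by omega⟩ →
            ∃ h : f t ∉ Finset.image x Finset.univ, g t = some ⟨f t, h⟩)))
    (hD : ∃ (m : ℕ)
        (σ : ZMod (Fintype.card (Option {v : Fin n // v ∉ Finset.image x Finset.univ})) ≃
          Option {v : Fin n // v ∉ Finset.image x Finset.univ}),
      0 < m ∧
      Fintype.card (Option {v : Fin n // v ∉ Finset.image x Finset.univ}) = m * (k - 1) ∧
      (∀ i : Fin m,
        Function.Injective (fun t : Fin k => σ (((i : ℕ) * (k - 1) + (t : ℕ) : ℕ))) ∧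
        DA (fun t : Fin k => σ (((i : ℕ) * (k - 1) + (t : ℕ) : ℕ)))) ∧
      (∃ i : Fin m, σ (((i : ℕ) * (k - 1) : ℕ)) = none)) :
    HasLooseHamCycle k (fun S : Finset (Fin n) =>
      S = Finset.image x Finset.univ ∨ ∃ f, A f ∧ S = Finset.image f Finset.univ) := by
  obtain ⟨m, σ, -, hcard, harcs, i0, hi0⟩ := hD
  obtain ⟨w, hw0, hwN, hinj, hwarcs⟩ := exists_rotated_walk σ hcard (fun i => (harcs i).2) i0
  rw [hi0] at hw0
  set N := Fintype.card (Option {v : Fin n // v ∉ Finset.image x Finset.univ})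
  have hN : 0 < N := Fintype.card_pos
  have hn : n = N + (k - 1) := by
    have := card_option_compl_image_add hx
    rw [Fintype.card_fin] at this
    omega
  refine hasLooseHamCycle_of_walk (m := m + 1) (N := N + (k - 1))
    (expandWalk x (x ⟨0, by omega⟩) w)
    (by rw [Fintype.card_fin, hn]) (by omega) (by rw [hcard]; ring) (by omega)
    (expandWalk_injOn _ (by omega) hx hw0 hinj) ?_ ?_
  · rw [expandWalk_add_of_none x _ w (hwN.trans hw0) hN.ne', expandWalk_of_lt x _ w hw0]
  · rintro (_ | i) hi
    · refine Or.inl (congrArg (Finset.image · Finset.univ) (funext fun t => ?_))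
      simp only [zero_mul, zero_add, expandWalk_of_lt x _ w hw0 t.isLt]
    · obtain ⟨f, hAf, hf⟩ := (hDA _).mp (hwarcs i (by omega))
      exact Or.inr ⟨f, hAf, by rw [expandWalk_arc (by omega) hw0 hinj
        (by rw [hcard]; exact Nat.mul_lt_mul_of_pos_right (by omega) (by omega)) hf]⟩
end

section
/- Let x, y be two distinct vertices of [n], let c_1 ∈ [n] be a color, and let G be an arc-colored directed graph on [n]. Define V* = ([n] \ {x,y}) ∪ {e*} for a new vertex e*, and let D be the arc-colored directed graph on V* whose arcs are those arcs (u,v) of G whose color differs from c_1 and which satisfy one of: {u,v} ∩ {x,y} = ∅; v = x (with x replaced by e*); or u = y (with y replaced by e*). If D contains a rainbow directed Hamilton cycle, then the edge-colored graph on [n] obtained from the underlying undirected edges of G together with the edge {x,y} colored c_1 contains a rainbow Hamilton cycle. -/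
/-!
Rotate the rainbow cycle of `D` so that it starts at `e*`, and split `e*` back into `y` (where
the cycle leaves it) and `x` (where the cycle returns to it). This gives a cyclic order of all
vertices in which every step is an arc of `G` carrying its `D`-color, all of which differ from
`c1`, except the closing step from `x` to `y`, which is the added edge of color `c1`.
-/

open Function

theorem Option.elim_injective {α β : Type*} {b : β} {f : α → β} (hf : Injective f)
    (hb : ∀ a, f a ≠ b) : Injective (fun o : Option α => o.elim b f) := by
  rintro (_ | a) (_ | a') h
  · rfl
  · exact absurd h.symm (hb a')
  · exact absurd h (hb a)
  · exact congrArg some (hf h)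

section Contraction

variable {V : Type*} {x y : V}

/-- Arcs of the contracted digraph leave `e* = none` as they leave `y` and enter it as they
enter `x`. -/
def liftTail (a : Option {v : V // v ≠ x ∧ v ≠ y}) : V := a.elim y Subtype.val

def liftHead (a : Option {v : V // v ≠ x ∧ v ≠ y}) : V := a.elim x Subtype.val

theorem liftTail_injective : Injective (liftTail : Option {v : V // v ≠ x ∧ v ≠ y} → V) := by
  rintro (_ | ⟨u, hu⟩) (_ | ⟨v, hv⟩) h
  · rfl
  · exact absurd h.symm hv.2
  · exact absurd h hu.2
  · exact congrArg some (Subtype.ext h)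

theorem liftTail_ne_left (hxy : x ≠ y) (a : Option {v : V // v ≠ x ∧ v ≠ y}) :
    liftTail a ≠ x := by
  rcases a with _ | ⟨u, hu⟩
  · exact hxy.symm
  · exact hu.1

theorem liftHead_eq_liftTail {a : Option {v : V // v ≠ x ∧ v ≠ y}} (ha : a ≠ none) :
    liftHead a = liftTail a := by
  obtain ⟨u, rfl⟩ := Option.ne_none_iff_exists'.1 ha
  rfl

theorem card_option_subtype_ne_and_ne_add_one [Fintype V] [DecidableEq V] (hxy : x ≠ y) :
    Fintype.card (Option {v : V // v ≠ x ∧ v ≠ y}) + 1 = Fintype.card V := by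
  have hfilter : Finset.univ.filter (fun v : V => v ≠ x ∧ v ≠ y) = ({x, y} : Finset V)ᶜ := by
    ext v
    simp
  rw [Fintype.card_option, Fintype.card_subtype, hfilter, add_assoc, one_add_one_eq_two,
    ← Finset.card_pair hxy, add_comm, Finset.card_add_card_compl]

end Contraction

namespace ZMod

variable (m : ℕ) [NeZero m]

/-- `ZMod (m + 1)` is `ZMod m` with the extra point `m = -1` inserted after `m - 1`. -/
noncomputable def optionEquivSucc : Option (ZMod m) ≃ ZMod (m + 1) :=
  Equiv.ofBijective (fun o => ((o.elim m val : ℕ) : ZMod (m + 1))) <| by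
    have hval : ∀ o : Option (ZMod m), o.elim m val < m + 1 := by
      rintro (_ | j)
      · exact m.lt_succ_self
      · exact Nat.lt_succ_of_lt j.val_lt
    refine (Fintype.bijective_iff_injective_and_card _).2 ⟨fun o o' h => ?_, by simp⟩
    have h' := congrArg val h
    rw [val_cast_of_lt (hval o), val_cast_of_lt (hval o')] at h'
    rcases o with _ | j <;> rcases o' with _ | j'
    · rfl
    · exact absurd h' (ne_of_gt j'.val_lt)
    · exact absurd h' (ne_of_lt j.val_lt)
    · exact congrArg some (val_injective m h')

variable {m}

theorem optionEquivSucc_none_add_one :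
    optionEquivSucc m none + 1 = optionEquivSucc m (some 0) := by
  change ((m : ℕ) : ZMod (m + 1)) + 1 = ((val (0 : ZMod m) : ℕ) : ZMod (m + 1))
  rw [val_zero, Nat.cast_zero, ← Nat.cast_succ, natCast_self]

theorem optionEquivSucc_some_add_one (j : ZMod m) :
    optionEquivSucc m (some j) + 1 =
      if j + 1 = 0 then optionEquivSucc m none else optionEquivSucc m (some (j + 1)) := by
  change ((j.val : ℕ) : ZMod (m + 1)) + 1 = if j + 1 = 0 then ((m : ℕ) : ZMod (m + 1))
    else (((j + 1).val : ℕ) : ZMod (m + 1))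
  have hcast : ((j.val + 1 : ℕ) : ZMod m) = j + 1 := by
    rw [Nat.cast_succ, natCast_zmod_val]
  rw [← Nat.cast_add_one]
  rcases (show j.val + 1 ≤ m from j.val_lt).eq_or_lt with h | h
  · rw [if_pos (by rw [← hcast, h, natCast_self]), h]
  · have hj : j + 1 ≠ 0 := fun h0 => by
      have h0val := congrArg val h0
      rw [← hcast, val_cast_of_lt h, val_zero] at h0val
      omega
    rw [if_neg hj, ← hcast, val_cast_of_lt h]

end ZMod

section Cycles

variable {α β : Type*} {m : ℕ}

def IsRainbowHamiltonCycle (D : α → α → Option β) (σ : ZMod m ≃ α) : Prop :=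
  (∀ i, (D (σ i) (σ (i + 1))).isSome) ∧ Injective (fun i => D (σ i) (σ (i + 1)))

theorem IsRainbowHamiltonCycle.rotate {D : α → α → Option β} {σ : ZMod m ≃ α}
    (h : IsRainbowHamiltonCycle D σ) (k : ZMod m) :
    IsRainbowHamiltonCycle D ((Equiv.addRight k).trans σ) := by
  have hshift : (fun i => D ((Equiv.addRight k).trans σ i)
      ((Equiv.addRight k).trans σ (i + 1))) = (fun i => D (σ i) (σ (i + 1))) ∘ (· + k) := by
    ext1 i
    simp [add_right_comm]
  refine ⟨fun i => ?_, ?_⟩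
  · simpa [add_right_comm] using h.1 (i + k)
  · rw [hshift]
    exact h.2.comp (add_left_injective k)

end Cycles

theorem exists_cycle_of_contracted_cycle {V : Type*} [Fintype V] {x y : V} (hxy : x ≠ y)
    {m n : ℕ} [NeZero m] (hV : Fintype.card V = n) (hmn : m + 1 = n)
    (σ : ZMod m ≃ Option {v : V // v ≠ x ∧ v ≠ y}) (hσ : σ 0 = none) :
    ∃ (τ : ZMod n ≃ V) (e : Option (ZMod m) ≃ ZMod n),
      τ (e none) = x ∧ τ (e none + 1) = y ∧
      ∀ j, τ (e (some j)) = liftTail (σ j) ∧ τ (e (some j) + 1) = liftHead (σ (j + 1)) := by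
  subst hmn
  let τ' : Option (ZMod m) → V := fun o => o.elim x (liftTail ∘ σ)
  have hτ' : Bijective τ' := by
    refine (Fintype.bijective_iff_injective_and_card _).2 ⟨?_, by simp [hV]⟩
    rintro (_ | i) (_ | j) h
    · rfl
    · exact absurd h.symm (liftTail_ne_left hxy _)
    · exact absurd h (liftTail_ne_left hxy _)
    · exact congrArg some (σ.injective (liftTail_injective h))
  let e := ZMod.optionEquivSucc m
  have hτ : ∀ o, (e.symm.trans (Equiv.ofBijective τ' hτ')) (e o) = τ' o := by simp
  refine ⟨e.symm.trans (Equiv.ofBijective τ' hτ'), e, hτ none, ?_, fun j => ⟨hτ (some j), ?_⟩⟩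
  · rw [ZMod.optionEquivSucc_none_add_one, hτ]
    simp [τ', hσ, liftTail]
  · rw [ZMod.optionEquivSucc_some_add_one]
    split_ifs with hj
    · rw [hτ, hj, hσ]
      rfl
    · rw [hτ, liftHead_eq_liftTail (hσ ▸ σ.injective.ne hj)]
      rfl

/-- Let `x ≠ y` be two vertices of `Fin n`, let `c1` be a color, and let `G` be an
arc-colored directed graph on `Fin n` (for an ordered pair `(u,v)` of distinct vertices,
`G u v = some c` means that `(u,v)` is an arc of color `c`, and `G u v = none` means
that `(u,v)` is not an arc).  Let `V* = (Fin n \ {x,y}) ∪ {e*}` for a new vertex `e*`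
(modelled as `Option {v // v ≠ x ∧ v ≠ y}`, where `none` is `e*`), and let `D` be the
arc-colored directed graph on `V*` whose arcs are the arcs `(u,v)` of `G` of color
different from `c1` with either `{u,v} ∩ {x,y} = ∅`, or `v = x` (with `x` replaced by
`e*`), or `u = y` (with `y` replaced by `e*`).  If `D` contains a rainbow directed
Hamilton cycle, then the edge-colored graph on `Fin n` obtained from the underlying
undirected edges of `G` together with the edge `{x,y}` colored `c1` contains a rainbow
Hamilton cycle. -/
theorem statement13 (n : ℕ) (x y : Fin n) (hxy : x ≠ y) (c1 : Fin n)
    (G : Fin n → Fin n → Option (Fin n))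
    (D : Option {v : Fin n // v ≠ x ∧ v ≠ y} → Option {v : Fin n // v ≠ x ∧ v ≠ y} →
      Option (Fin n))
    (hD : ∀ a b, D a b =
      match a, b with
      | some u, some v => if G u.1 v.1 = some c1 then none else G u.1 v.1
      | some u, none => if G u.1 x = some c1 then none else G u.1 x
      | none, some v => if G y v.1 = some c1 then none else G y v.1
      | none, none => none)
    (hHC : ∃ σ : ZMod (Fintype.card (Option {v : Fin n // v ≠ x ∧ v ≠ y})) ≃
        Option {v : Fin n // v ≠ x ∧ v ≠ y},
      (∀ i, (D (σ i) (σ (i + 1))).isSome) ∧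
      Function.Injective
        (fun i : ZMod (Fintype.card (Option {v : Fin n // v ≠ x ∧ v ≠ y})) =>
          D (σ i) (σ (i + 1)))) :
    ∃ (τ : ZMod n ≃ Fin n) (χ : ZMod n → Fin n),
      Function.Injective χ ∧
      ∀ i : ZMod n,
        (Sym2.mk (τ i, τ (i + 1)) = Sym2.mk (x, y) ∧ χ i = c1) ∨
        G (τ i) (τ (i + 1)) = some (χ i) ∨ G (τ (i + 1)) (τ i) = some (χ i) := by
  obtain ⟨σ₀, hσ₀⟩ := hHC
  have : NeZero (Fintype.card (Option {v : Fin n // v ≠ x ∧ v ≠ y})) := ⟨by simp⟩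
  let σ := (Equiv.addRight (σ₀.symm none)).trans σ₀
  have hσ : IsRainbowHamiltonCycle D σ := IsRainbowHamiltonCycle.rotate hσ₀ _
  obtain ⟨τ, e, hx, hy, hτ⟩ := exists_cycle_of_contracted_cycle hxy (Fintype.card_fin n)
    ((card_option_subtype_ne_and_ne_add_one hxy).trans (Fintype.card_fin n)) σ (by simp [σ])
  choose col hcol using fun j => Option.isSome_iff_exists.1 (hσ.1 j)
  have hDG : ∀ {a b c}, D a b = some c → G (liftTail a) (liftHead b) = some c ∧ c ≠ c1 := by
    intro a b c h
    rw [hD] at h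
    rcases a with _ | u <;> rcases b with _ | v <;> dsimp only at h
    · cases h
    all_goals
      split_ifs at h with hc1
      exact ⟨h, fun hc => hc1 (hc ▸ h)⟩
  have hG := fun j => hDG (hcol j)
  have hcol_inj : Injective col := fun i j h => hσ.2 (by simp only [hcol, h])
  refine ⟨τ, fun i => (e.symm i).elim c1 col, ?_, fun i => ?_⟩
  · exact (Option.elim_injective hcol_inj fun j => (hG j).2).comp e.symm.injective
  · obtain ⟨o, rfl⟩ := e.surjective i
    rcases o with _ | j
    · left
      simp [hx, hy]
    · right; left
      simpa only [Equiv.symm_apply_apply, Option.elim_some, (hτ j).1, (hτ j).2] using (hG j).1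
end
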